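/- arXiv:2604.01009 — 3 statements merged into one kernel-verified Lean document; each statement's English description precedes it below -/
import Mathlib

section
/- Let f ∈ C²([s₀,∞), ℝ) and δ > 0 satisfy f''(s) ≥ δ² f(s) for all s ≥ s₀. Suppose there exists a sequence s̄ₙ ≥ s₀ tending to infinity with f(s̄ₙ) → 0. Then f(s) ≤ f(s₀)·e^{-δ(s-s₀)} for all s ≥ s₀. -/
/-!
Put `u = f' + δ f`. The inequality `f'' ≥ δ² f` says `u' ≥ δ u`, so `u e^{-δ s}` is
nondecreasing. If `u ≤ 0` everywhere, then `(f e^{δ s})' = u e^{δ s} ≤ 0`, which is the claimed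
bound. Otherwise `u(t) > 0` for some `t`, hence `u ≥ u(t)` on `[t, ∞)`, and integrating
`f' + δ f ≥ u(t)` gives `f(s) ≥ u(t)/δ + O(e^{-δ s})`, so `f` cannot tend to `0` along `s̄ₙ → ∞`.
-/

open Real Filter Set Topology

section

variable {D : Set ℝ} {f f' : ℝ → ℝ}

theorem Convex.monotoneOn_of_hasDerivWithinAt_nonneg (hD : Convex ℝ D)
    (hf : ∀ x ∈ D, HasDerivWithinAt f (f' x) D x) (hf' : ∀ x ∈ D, 0 ≤ f' x) :
    MonotoneOn f D :=
  _root_.monotoneOn_of_hasDerivWithinAt_nonneg hD (fun x hx => (hf x hx).continuousWithinAt)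
    (fun x hx => (hf x (interior_subset hx)).mono interior_subset)
    (fun x hx => hf' x (interior_subset hx))

theorem Convex.monotoneOn_mul_exp_of_deriv_add_mul_nonneg (hD : Convex ℝ D) {l : ℝ}
    (hf : ∀ x ∈ D, HasDerivWithinAt f (f' x) D x) (hle : ∀ x ∈ D, 0 ≤ f' x + l * f x) :
    MonotoneOn (fun x => f x * exp (l * x)) D := by
  refine hD.monotoneOn_of_hasDerivWithinAt_nonneg
    (f' := fun x => (f' x + l * f x) * exp (l * x)) (fun x hx => ?_)
    (fun x hx => mul_nonneg (hle x hx) (exp_pos _).le)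
  have hexp : HasDerivAt (fun y => exp (l * y)) (exp (l * x) * l) x := by
    simpa using ((hasDerivAt_id x).const_mul l).exp
  exact ((hf x hx).fun_mul hexp.hasDerivWithinAt).congr_deriv (by ring)

theorem Convex.antitoneOn_mul_exp_of_deriv_add_mul_nonpos (hD : Convex ℝ D) {l : ℝ}
    (hf : ∀ x ∈ D, HasDerivWithinAt f (f' x) D x) (hle : ∀ x ∈ D, f' x + l * f x ≤ 0) :
    AntitoneOn (fun x => f x * exp (l * x)) D := by
  have := hD.monotoneOn_mul_exp_of_deriv_add_mul_nonneg (l := l) (fun x hx => (hf x hx).neg)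
    fun x hx => by simp only [Pi.neg_apply]; linarith [hle x hx]
  simpa [neg_mul] using this.neg

variable {a δ c : ℝ}

theorem le_mul_exp_of_deriv_add_mul_nonpos
    (hf : ∀ x ∈ Ici a, HasDerivWithinAt f (f' x) (Ici a) x)
    (hle : ∀ x ∈ Ici a, f' x + δ * f x ≤ 0) :
    ∀ x ∈ Ici a, f x ≤ f a * exp (-δ * (x - a)) := by
  intro x hx
  rw [show -δ * (x - a) = δ * a - δ * x by ring, exp_sub, mul_div_assoc',
    le_div_iff₀ (exp_pos _)]
  exact (convex_Ici a).antitoneOn_mul_exp_of_deriv_add_mul_nonpos hf hle self_mem_Ici hx hx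

theorem add_mul_exp_le_of_le_deriv_add_mul (hδ : δ ≠ 0)
    (hf : ∀ x ∈ Ici a, HasDerivWithinAt f (f' x) (Ici a) x)
    (hc : ∀ x ∈ Ici a, c ≤ f' x + δ * f x) :
    ∀ x ∈ Ici a, c / δ + (f a - c / δ) * exp (-δ * (x - a)) ≤ f x := by
  intro x hx
  have hmono := (convex_Ici a).monotoneOn_mul_exp_of_deriv_add_mul_nonneg (l := δ)
    (fun x hx => (hf x hx).sub_const (c / δ)) fun x hx => by
      rw [mul_sub, mul_div_cancel₀ c hδ]; linarith [hc x hx]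
  rw [show -δ * (x - a) = δ * a - δ * x by ring, exp_sub, mul_div_assoc', ← le_sub_iff_add_le',
    div_le_iff₀ (exp_pos _)]
  exact hmono self_mem_Ici hx hx

theorem le_mul_of_le_deriv_add_mul_of_tendsto {y : ℝ} (hδ : 0 < δ)
    (hf : ∀ x ∈ Ici a, HasDerivWithinAt f (f' x) (Ici a) x)
    (hc : ∀ x ∈ Ici a, c ≤ f' x + δ * f x) {ι : Type*} {L : Filter ι} [L.NeBot] {s : ι → ℝ}
    (hs : Tendsto s L atTop) (hfs : Tendsto (fun i => f (s i)) L (𝓝 y)) : c ≤ δ * y := by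
  have hexp : Tendsto (fun x => exp (-δ * (x - a))) atTop (𝓝 0) := by
    refine tendsto_exp_atBot.comp (Tendsto.const_mul_atTop_of_neg (neg_lt_zero.2 hδ) ?_)
    simpa only [sub_eq_add_neg, id_eq] using
      tendsto_atTop_add_const_right atTop (-a) tendsto_id
  have hbound : Tendsto (fun x => c / δ + (f a - c / δ) * exp (-δ * (x - a))) atTop
      (𝓝 (c / δ)) := by
    simpa using (hexp.const_mul (f a - c / δ)).const_add (c / δ)
  have := le_of_tendsto_of_tendsto (hbound.comp hs) hfs <|
    (hs.eventually_ge_atTop a).mono fun i hi =>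
      add_mul_exp_le_of_le_deriv_add_mul hδ.ne' hf hc (s i) hi
  rwa [div_le_iff₀' hδ] at this

end

theorem stmt0_general (s₀ δ : ℝ) (hδ : 0 < δ) (f f' f'' : ℝ → ℝ)
    (hf' : ∀ s ∈ Ici s₀, HasDerivWithinAt f (f' s) (Ici s₀) s)
    (hf'' : ∀ s ∈ Ici s₀, HasDerivWithinAt f' (f'' s) (Ici s₀) s)
    (hineq : ∀ s ∈ Ici s₀, δ ^ 2 * f s ≤ f'' s)
    (sbar : ℕ → ℝ)
    (hsbartop : Tendsto sbar atTop atTop)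
    (hfsbar : Tendsto (fun n => f (sbar n)) atTop (nhds 0)) :
    ∀ s ∈ Ici s₀, f s ≤ f s₀ * Real.exp (-δ * (s - s₀)) := by
  set u : ℝ → ℝ := fun s => f' s + δ * f s
  have hu : ∀ s ∈ Ici s₀, HasDerivWithinAt u (f'' s + δ * f' s) (Ici s₀) s :=
    fun s hs => (hf'' s hs).add ((hf' s hs).const_mul δ)
  have hu_mono : MonotoneOn (fun s => u s * exp (-δ * s)) (Ici s₀) :=
    (convex_Ici s₀).monotoneOn_mul_exp_of_deriv_add_mul_nonneg hu fun s hs => by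
      linarith [hineq s hs]
  by_cases hu_nonpos : ∀ s ∈ Ici s₀, u s ≤ 0
  · exact le_mul_exp_of_deriv_add_mul_nonpos hf' hu_nonpos
  push Not at hu_nonpos
  obtain ⟨t, ht, hut⟩ := hu_nonpos
  have hsub : Ici t ⊆ Ici s₀ := Ici_subset_Ici.2 ht
  have hu_ge : ∀ s ∈ Ici t, u t ≤ u s := fun s hs => calc
    u t ≤ u t * exp (δ * (s - t)) :=
      le_mul_of_one_le_right hut.le (one_le_exp (mul_nonneg hδ.le (sub_nonneg.2 hs)))
    _ ≤ u s := by
      rw [show δ * (s - t) = -δ * t - -δ * s by ring, exp_sub, mul_div_assoc',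
        div_le_iff₀ (exp_pos _)]
      exact hu_mono ht (hsub hs) hs
  have := le_mul_of_le_deriv_add_mul_of_tendsto hδ (fun s hs => (hf' s (hsub hs)).mono hsub)
    hu_ge hsbartop hfsbar
  linarith

theorem stmt0 (s₀ δ : ℝ) (hδ : 0 < δ) (f f' f'' : ℝ → ℝ)
    (hf' : ∀ s ∈ Ici s₀, HasDerivWithinAt f (f' s) (Ici s₀) s)
    (hf'' : ∀ s ∈ Ici s₀, HasDerivWithinAt f' (f'' s) (Ici s₀) s)
    (hf''cont : ContinuousOn f'' (Ici s₀))
    (hineq : ∀ s ∈ Ici s₀, δ ^ 2 * f s ≤ f'' s)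
    (sbar : ℕ → ℝ) (hsbar : ∀ n, s₀ ≤ sbar n)
    (hsbartop : Tendsto sbar atTop atTop)
    (hfsbar : Tendsto (fun n => f (sbar n)) atTop (nhds 0)) :
    ∀ s ∈ Ici s₀, f s ≤ f s₀ * Real.exp (-δ * (s - s₀)) :=
  stmt0_general s₀ δ hδ f f' f'' hf' hf'' hineq sbar hsbartop hfsbar
end

section
/- Let γ : I → M be a gradient flow line on an unbounded closed interval I = [a,∞), i.e. f∘γ ∈ C¹ with (f∘γ)' = G∘γ ≥ 0. Suppose there exist b > a with ε := f(γ(b)) − f(γ(a)) > 0, a sequence sₙ → ∞, and a continuous curve γ̄ : I → M such that γ(·+sₙ) → γ̄ pointwise on I. Suppose further ε' := f(γ̄(b)) − f(γ̄(a)) > 0. Then the total energy ∫_a^∞ G(γ(s)) ds is infinite, i.e. for every k₀ ∈ ℕ one can find disjoint intervals [a+s_{n_k}, b+s_{n_k}], k=1,…,k₀, each contributing at least ε'/2 to the energy, so E(γ) ≥ k₀·ε'/2. -/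
open Set Filter Topology MeasureTheory
open scoped ENNReal

/-!
By the fundamental theorem of calculus the energy `∫ G ∘ γ` of a window `[c, d]` is at least
`f (γ d) - f (γ c)`. Since `f (γ (b + sₙ)) - f (γ (a + sₙ)) → f (γ̄ b) - f (γ̄ a) = ε' > 0`, every
window `[a + sₙ, b + sₙ]` with `n` large carries energy at least `ε' / 2`; as `sₙ → ∞` we can pick
`k₀` of these windows pairwise disjoint inside `[a, ∞)`, and their energies add up.
-/

theorem ofReal_integral_le_lintegral_ofReal {α : Type*} [MeasurableSpace α]
    {μ : Measure α} {g : α → ℝ} (hg : Integrable g μ) :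
    ENNReal.ofReal (∫ x, g x ∂μ) ≤ ∫⁻ x, ENNReal.ofReal (g x) ∂μ := by
  rw [integral_eq_lintegral_pos_part_sub_lintegral_neg_part hg]
  refine (ENNReal.ofReal_le_ofReal (sub_le_self _ ENNReal.toReal_nonneg)).trans ?_
  exact ENNReal.ofReal_toReal_le

theorem ofReal_sub_le_setLIntegral_Icc_of_hasDerivWithinAt {φ g : ℝ → ℝ} {c d : ℝ} (hcd : c ≤ d)
    (hφ : ContinuousOn φ (Icc c d)) (hderiv : ∀ t ∈ Ioo c d, HasDerivWithinAt φ (g t) (Ioi t) t)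
    (hg : IntegrableOn g (Icc c d)) :
    ENNReal.ofReal (φ d - φ c) ≤ ∫⁻ t in Icc c d, ENNReal.ofReal (g t) := by
  rw [← intervalIntegral.integral_eq_sub_of_hasDeriv_right_of_le hcd hφ hderiv
    ((intervalIntegrable_iff_integrableOn_Icc_of_le hcd).2 hg), intervalIntegral.integral_of_le hcd]
  calc ENNReal.ofReal (∫ t in Ioc c d, g t)
      ≤ ∫⁻ t in Ioc c d, ENNReal.ofReal (g t) :=
        ofReal_integral_le_lintegral_ofReal (hg.mono_set Ioc_subset_Icc_self)
    _ ≤ ∫⁻ t in Icc c d, ENNReal.ofReal (g t) := lintegral_mono_set Ioc_subset_Icc_self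

theorem exists_seq_add_lt_of_tendsto_atTop {u : ℕ → ℝ} (hu : Tendsto u atTop atTop)
    {P : ℕ → Prop} (hP : ∀ᶠ n in atTop, P n) {L : ℝ} (hL : 0 ≤ L) :
    ∃ m : ℕ → ℕ, (∀ k, P (m k)) ∧ ∀ i j, i < j → u (m i) + L < u (m j) := by
  choose next hnextP hnext_lt using fun C => (hP.and (hu.eventually_gt_atTop C)).exists
  let m : ℕ → ℕ := fun k => (fun n => next (u n + L))^[k] (next 0)
  have hstep : ∀ k, u (m k) + L < u (m (k + 1)) := fun k => by
    simp only [m, Function.iterate_succ_apply']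
    exact hnext_lt _
  have hmono : StrictMono (u ∘ m) :=
    strictMono_nat_of_lt_succ fun k => (le_add_of_nonneg_right hL).trans_lt (hstep k)
  refine ⟨m, fun k => ?_, fun i j hij => (hstep i).trans_le (hmono.monotone hij)⟩
  cases k with
  | zero => exact hnextP 0
  | succ k => simp only [m, Function.iterate_succ_apply']; exact hnextP _

theorem sum_setLIntegral_le_of_pairwise_disjoint {α ι : Type*} [MeasurableSpace α] [Fintype ι]
    {μ : Measure α} {A : ι → Set α} {S : Set α} (hA : ∀ i, MeasurableSet (A i))
    (hdisj : Pairwise (Function.onFun Disjoint A)) (hAS : ∀ i, A i ⊆ S) (g : α → ℝ≥0∞) :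
    ∑ i, ∫⁻ x in A i, g x ∂μ ≤ ∫⁻ x in S, g x ∂μ := by
  calc ∑ i, ∫⁻ x in A i, g x ∂μ = ∫⁻ x in ⋃ i, A i, g x ∂μ := by
        rw [lintegral_iUnion hA hdisj, tsum_fintype]
    _ ≤ ∫⁻ x in S, g x ∂μ := lintegral_mono_set (iUnion_subset hAS)

theorem ofReal_sub_le_setLIntegral_Icc_of_flow {M : Type*} [TopologicalSpace M] {f G : M → ℝ}
    (hG : Continuous G) {a : ℝ} {γ : ℝ → M} (hγ : ContinuousOn γ (Ici a))
    (hflow : ∀ s ∈ Ici a, HasDerivWithinAt (f ∘ γ) (G (γ s)) (Ici a) s) {c d : ℝ}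
    (hac : a ≤ c) (hcd : c ≤ d) :
    ENNReal.ofReal (f (γ d) - f (γ c)) ≤ ∫⁻ t in Icc c d, ENNReal.ofReal (G (γ t)) := by
  have hsub : Icc c d ⊆ Ici a := fun t ht => hac.trans ht.1
  refine ofReal_sub_le_setLIntegral_Icc_of_hasDerivWithinAt (φ := f ∘ γ) hcd
    (fun t ht => (hflow t (hsub ht)).continuousWithinAt.mono hsub) (fun t ht => ?_)
    ((hG.comp_continuousOn hγ).mono hsub |>.integrableOn_Icc)
  exact (hflow t (hac.trans ht.1.le)).mono (Ioi_subset_Ici (hac.trans ht.1.le))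

theorem stmt6_general {M : Type*} [TopologicalSpace M]
    (f G : M → ℝ) (hf : Continuous f) (hG : Continuous G)
    (a : ℝ) (γ : ℝ → M) (hγ : ContinuousOn γ (Ici a))
    (hflow : ∀ s ∈ Ici a, HasDerivWithinAt (f ∘ γ) (G (γ s)) (Ici a) s)
    (b : ℝ) (hb : a < b)
    (sseq : ℕ → ℝ) (hstop : Tendsto sseq atTop atTop)
    (γbar : ℝ → M)
    (hconv : ∀ s ∈ Ici a, Tendsto (fun n => γ (s + sseq n)) atTop (𝓝 (γbar s)))
    (ε' : ℝ) (hε' : ε' = f (γbar b) - f (γbar a)) (hε'pos : 0 < ε') :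
    ∀ k₀ : ℕ, ∃ n : Fin k₀ → ℕ,
      (∀ i j : Fin k₀, i < j → b + sseq (n i) < a + sseq (n j)) ∧
      (∀ i : Fin k₀, ENNReal.ofReal (ε' / 2)
          ≤ ∫⁻ s in Icc (a + sseq (n i)) (b + sseq (n i)), ENNReal.ofReal (G (γ s))) ∧
      (k₀ : ℝ≥0∞) * ENNReal.ofReal (ε' / 2)
        ≤ ∫⁻ s in Ici a, ENNReal.ofReal (G (γ s)) := by
  intro k₀
  have hlim : Tendsto (fun n => f (γ (b + sseq n)) - f (γ (a + sseq n))) atTop (𝓝 ε') :=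
    hε' ▸ ((hf.tendsto _).comp (hconv b hb.le)).sub
      ((hf.tendsto _).comp (hconv a (mem_Ici.2 le_rfl)))
  have hgood : ∀ᶠ n in atTop, 0 ≤ sseq n ∧ ε' / 2 ≤ f (γ (b + sseq n)) - f (γ (a + sseq n)) :=
    (hstop.eventually_ge_atTop 0).and (hlim.eventually (eventually_ge_nhds (half_lt_self hε'pos)))
  obtain ⟨m, hm, hsep⟩ := exists_seq_add_lt_of_tendsto_atTop hstop hgood (sub_nonneg.2 hb.le)
  have hbump : ∀ k, ENNReal.ofReal (ε' / 2)
      ≤ ∫⁻ s in Icc (a + sseq (m k)) (b + sseq (m k)), ENNReal.ofReal (G (γ s)) := fun k =>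
    (ENNReal.ofReal_le_ofReal (hm k).2).trans <| ofReal_sub_le_setLIntegral_Icc_of_flow hG hγ hflow
      (by linarith [(hm k).1]) (by linarith)
  have hdisj : Pairwise (Function.onFun Disjoint
      fun i : Fin k₀ => Icc (a + sseq (m i)) (b + sseq (m i))) :=
    (pairwise_disjoint_on _).2 fun i j hij => Set.disjoint_left.2 fun t hti htj => by
      linarith [hti.2, htj.1, hsep i j hij]
  refine ⟨fun i => m i, fun i j hij => by linarith [hsep i j hij], fun i => hbump i, ?_⟩
  calc (k₀ : ℝ≥0∞) * ENNReal.ofReal (ε' / 2) = ∑ _i : Fin k₀, ENNReal.ofReal (ε' / 2) := by simp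
    _ ≤ ∑ i : Fin k₀, ∫⁻ s in Icc (a + sseq (m i)) (b + sseq (m i)), ENNReal.ofReal (G (γ s)) :=
      Finset.sum_le_sum fun i _ => hbump i
    _ ≤ ∫⁻ s in Ici a, ENNReal.ofReal (G (γ s)) :=
      sum_setLIntegral_le_of_pairwise_disjoint (fun _ => measurableSet_Icc) hdisj
        (fun i t ht => mem_Ici.2 (by linarith [ht.1, (hm i).1])) _

theorem stmt6 {M : Type*} [TopologicalSpace M]
    (f G : M → ℝ) (hf : Continuous f) (hG : Continuous G) (hGnn : ∀ x, 0 ≤ G x)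
    (a : ℝ) (γ : ℝ → M) (hγ : ContinuousOn γ (Ici a))
    (hflow : ∀ s ∈ Ici a, HasDerivWithinAt (f ∘ γ) (G (γ s)) (Ici a) s)
    (b : ℝ) (hb : a < b)
    (ε : ℝ) (hε : ε = f (γ b) - f (γ a)) (hεpos : 0 < ε)
    (sseq : ℕ → ℝ) (hs0 : ∀ n, 0 ≤ sseq n) (hstop : Tendsto sseq atTop atTop)
    (γbar : ℝ → M) (hγbarcont : ContinuousOn γbar (Ici a))
    (hconv : ∀ s ∈ Ici a, Tendsto (fun n => γ (s + sseq n)) atTop (𝓝 (γbar s)))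
    (ε' : ℝ) (hε' : ε' = f (γbar b) - f (γbar a)) (hε'pos : 0 < ε') :
    ∀ k₀ : ℕ, ∃ n : Fin k₀ → ℕ,
      (∀ i j : Fin k₀, i < j → b + sseq (n i) < a + sseq (n j)) ∧
      (∀ i : Fin k₀, ENNReal.ofReal (ε' / 2)
          ≤ ∫⁻ s in Icc (a + sseq (n i)) (b + sseq (n i)), ENNReal.ofReal (G (γ s))) ∧
      (k₀ : ℝ≥0∞) * ENNReal.ofReal (ε' / 2)
        ≤ ∫⁻ s in Ici a, ENNReal.ofReal (G (γ s)) :=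
  stmt6_general f G hf hG a γ hγ hflow b hb sseq hstop γbar hconv ε' hε' hε'pos
end

section
/- Let γ : [a,∞) → M be a gradient flow line (f∘γ ∈ C¹, (f∘γ)' = G∘γ with G ≥ 0 continuous) of finite energy E(γ) = ∫_a^∞ G∘γ < ∞, and suppose sₙ → ∞ and γ(·+sₙ)|_{[a,∞)} converges pointwise to a gradient flow line γ̄ : [a,∞) → M. Then f ∘ γ̄ is constant on [a,∞), and consequently γ̄([a,∞)) ⊆ G⁻¹(0). -/
/-!
Along γ, `f ∘ γ` increases by `∫ G ∘ γ`, so finite energy makes `f ∘ γ` converge to some `L`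
at infinity. Since `γ (s + sₙ) → γ̄ s` and `sₙ → ∞`, continuity of `f` gives `f (γ̄ s) = L` for
every `s`. Hence `f ∘ γ̄` is constant, and its derivative `G ∘ γ̄` vanishes.
-/

open Set Filter Topology MeasureTheory

lemma tendsto_atTop_of_hasDerivWithinAt_Ici {F g : ℝ → ℝ} {a : ℝ}
    (hF : ∀ s ∈ Ici a, HasDerivWithinAt F (g s) (Ici a) s) (hg : IntegrableOn g (Ici a)) :
    Tendsto F atTop (𝓝 (F a + ∫ x in Ioi a, g x)) := by
  have ftc : ∀ t ∈ Ici a, ∫ x in a..t, g x = F t - F a := fun t (ht : a ≤ t) =>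
    intervalIntegral.integral_eq_sub_of_hasDeriv_right_of_le ht
      (fun x hx => (hF x hx.1).continuousWithinAt.mono Icc_subset_Ici_self)
      (fun x hx => (hF x hx.1.le).mono (Ioi_subset_Ici hx.1.le))
      ((intervalIntegrable_iff_integrableOn_Icc_of_le ht).mpr (hg.mono_set Icc_subset_Ici_self))
  have hlim : Tendsto (fun t => F a + ∫ x in a..t, g x) atTop (𝓝 (F a + ∫ x in Ioi a, g x)) :=
    tendsto_const_nhds.add <|
      intervalIntegral_tendsto_integral_Ioi a (hg.mono_set Ioi_subset_Ici_self) tendsto_id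
  refine hlim.congr' ?_
  filter_upwards [eventually_ge_atTop a] with t ht
  rw [ftc t ht]
  ring

lemma hasDerivWithinAt_Ici_eq_zero_of_eqOn_const {F : ℝ → ℝ} {a s F' c : ℝ} (hs : s ∈ Ici a)
    (hF : HasDerivWithinAt F F' (Ici a) s) (hconst : EqOn F (fun _ => c) (Ici a)) : F' = 0 :=
  (uniqueDiffOn_Ici a s hs).eq_deriv _ hF <|
    (hasDerivWithinAt_const s (Ici a) c).congr hconst (hconst hs)

theorem stmt7_general {M : Type*} [TopologicalSpace M]
    (f G : M → ℝ) (hf : Continuous f)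
    (a : ℝ) (γ : ℝ → M)
    (hflow : ∀ s ∈ Ici a, HasDerivWithinAt (f ∘ γ) (G (γ s)) (Ici a) s)
    (hint : IntegrableOn (fun s => G (γ s)) (Ici a))
    (sseq : ℕ → ℝ) (hstop : Tendsto sseq atTop atTop)
    (γbar : ℝ → M)
    (hbarflow : ∀ s ∈ Ici a, HasDerivWithinAt (f ∘ γbar) (G (γbar s)) (Ici a) s)
    (hconv : ∀ s ∈ Ici a, Tendsto (fun n => γ (s + sseq n)) atTop (𝓝 (γbar s))) :
    (∀ s ∈ Ici a, f (γbar s) = f (γbar a)) ∧ (∀ s ∈ Ici a, G (γbar s) = 0) := by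
  set L := f (γ a) + ∫ u in Ioi a, G (γ u)
  have hlim : Tendsto (f ∘ γ) atTop (𝓝 L) := tendsto_atTop_of_hasDerivWithinAt_Ici hflow hint
  have hbar_eq : EqOn (f ∘ γbar) (fun _ => L) (Ici a) := fun s hs =>
    tendsto_nhds_unique ((hf.tendsto _).comp (hconv s hs))
      (hlim.comp (tendsto_atTop_add_const_left _ s hstop))
  exact ⟨fun s hs => (hbar_eq hs).trans (hbar_eq self_mem_Ici).symm,
    fun s hs => hasDerivWithinAt_Ici_eq_zero_of_eqOn_const hs (hbarflow s hs) hbar_eq⟩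

theorem stmt7 {M : Type*} [TopologicalSpace M] [TopologicalSpace.MetrizableSpace M]
    (f G : M → ℝ) (hf : Continuous f) (hG : Continuous G) (hGnn : ∀ x, 0 ≤ G x)
    (a : ℝ) (γ : ℝ → M) (hγ : ContinuousOn γ (Ici a))
    (hflow : ∀ s ∈ Ici a, HasDerivWithinAt (f ∘ γ) (G (γ s)) (Ici a) s)
    (hint : IntegrableOn (fun s => G (γ s)) (Ici a))
    (sseq : ℕ → ℝ) (hs0 : ∀ n, 0 ≤ sseq n) (hstop : Tendsto sseq atTop atTop)
    (γbar : ℝ → M) (hγbarcont : ContinuousOn γbar (Ici a))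
    (hbarflow : ∀ s ∈ Ici a, HasDerivWithinAt (f ∘ γbar) (G (γbar s)) (Ici a) s)
    (hconv : ∀ s ∈ Ici a, Tendsto (fun n => γ (s + sseq n)) atTop (𝓝 (γbar s))) :
    (∀ s ∈ Ici a, f (γbar s) = f (γbar a)) ∧ (∀ s ∈ Ici a, G (γbar s) = 0) :=
  stmt7_general f G hf a γ hflow hint sseq hstop γbar hbarflow hconv
end
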